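/- arXiv:2109.09834 — 3 statements merged into one kernel-verified Lean document; each statement's English description precedes it below -/
import Mathlib

section
/- Let X₁, X₂, X₃, X₄ be real-valued random variables whose joint distribution is a centered multivariate Gaussian. Then E(X₁X₂X₃X₄) = cov(X₁,X₂)·cov(X₃,X₄) + cov(X₁,X₃)·cov(X₂,X₄) + cov(X₁,X₄)·cov(X₂,X₃). -/
open MeasureTheory ProbabilityTheory Finset

/-- A random vector `X : Ω → Fin n → ℝ` is centered multivariate Gaussian if it is measurable
and every linear combination of its components has a (centered) Gaussian law on `ℝ`. -/
def IsCenteredGaussian {Ω : Type*} [MeasurableSpace Ω] (μ : Measure Ω)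
    {n : ℕ} (X : Ω → Fin n → ℝ) : Prop :=
  Measurable X ∧ ∀ a : Fin n → ℝ, ∃ v : NNReal,
    Measure.map (fun ω => ∑ i, a i * X ω i) μ = gaussianReal 0 v

/-- The covariance `cov(U, V) = E(UV) − E(U)E(V)` of two real random variables. -/
noncomputable def covRV {Ω : Type*} [MeasurableSpace Ω] (μ : Measure Ω)
    (U V : Ω → ℝ) : ℝ :=
  (∫ ω, U ω * V ω ∂μ) - (∫ ω, U ω ∂μ) * (∫ ω, V ω ∂μ)

/-!
Every linear combination `⟨a, X⟩` of a centred Gaussian vector is a centred real Gaussian, whose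
fourth moment is three times the square of its second moment (read off from the fourth derivative
of its moment generating function `exp (v t² / 2)` at `0`). With `cᵢⱼ = E XᵢXⱼ` this gives the
identity of quartic forms `E ⟨a, X⟩⁴ = 3 (∑ aᵢ aⱼ cᵢⱼ)²`. Polarization recovers `x₀x₁x₂x₃` from the
fourth powers `⟨a, x⟩⁴` at the sign vectors `a = (1, ±1, ±1, ±1)`, weighted by the product of the
signs; applied to both sides, it turns the identity into Isserlis' formula.
-/

open Real
open scoped NNReal

lemma hasDerivAt_mul_exp_sq {p : ℝ → ℝ} {p' c t : ℝ} (hp : HasDerivAt p p' t) :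
    HasDerivAt (fun s => p s * exp (c * s ^ 2 / 2))
      ((p' + c * t * p t) * exp (c * t ^ 2 / 2)) t := by
  have h := (((hasDerivAt_pow 2 t).const_mul c).div_const 2).exp
  exact (hp.mul h).congr_deriv (by push_cast; ring)

lemma integral_pow_four_gaussianReal (v : ℝ≥0) :
    ∫ x, x ^ 4 ∂gaussianReal 0 v = 3 * (v : ℝ) ^ 2 := by
  have hmgf : ∫ x, x ^ 4 ∂gaussianReal 0 v =
      iteratedDeriv 4 (mgf (fun x => x) (gaussianReal 0 v)) 0 := by
    rw [iteratedDeriv_mgf_zero] <;> simp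
  rw [hmgf, mgf_fun_id_gaussianReal]
  simp only [zero_mul, zero_add, iteratedDeriv_succ', iteratedDeriv_zero]
  set c : ℝ := (v : ℝ)
  have d1 : deriv (fun t => exp (c * t ^ 2 / 2)) = fun t => c * t * exp (c * t ^ 2 / 2) := by
    funext t
    simpa using (hasDerivAt_mul_exp_sq (c := c) (hasDerivAt_const t (1 : ℝ))).deriv
  have d2 : deriv (fun t => c * t * exp (c * t ^ 2 / 2)) =
      fun t => (c + c ^ 2 * t ^ 2) * exp (c * t ^ 2 / 2) := by
    funext t
    exact (hasDerivAt_mul_exp_sq ((hasDerivAt_id t).const_mul c)).deriv.trans (by simp; ring)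
  have d3 : deriv (fun t => (c + c ^ 2 * t ^ 2) * exp (c * t ^ 2 / 2)) =
      fun t => (3 * c ^ 2 * t + c ^ 3 * t ^ 3) * exp (c * t ^ 2 / 2) := by
    funext t
    exact (hasDerivAt_mul_exp_sq (((hasDerivAt_pow 2 t).const_mul (c ^ 2)).const_add c)).deriv.trans
      (by push_cast; ring)
  have d4 : deriv (fun t => (3 * c ^ 2 * t + c ^ 3 * t ^ 3) * exp (c * t ^ 2 / 2)) 0 = 3 * c ^ 2 :=
    (hasDerivAt_mul_exp_sq (((hasDerivAt_id 0).const_mul (3 * c ^ 2)).add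
      ((hasDerivAt_pow 3 0).const_mul (c ^ 3)))).deriv.trans (by simp)
  rw [d1, d2, d3, d4]

lemma integral_sq_gaussianReal (v : ℝ≥0) : ∫ x, x ^ 2 ∂gaussianReal 0 v = v := by
  simpa using (variance_eq_integral (μ := gaussianReal 0 v) measurable_id'.aemeasurable).symm.trans
    variance_fun_id_gaussianReal

section GaussianLaw

variable {Ω : Type*} [MeasurableSpace Ω] {μ : Measure Ω} {Y : Ω → ℝ} {v : ℝ≥0}

lemma memLp_of_hasLaw_gaussianReal {m : ℝ} (hY : HasLaw Y (gaussianReal m v) μ) (p : ℝ≥0) :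
    MemLp Y p μ := by
  have h := memLp_id_gaussianReal (μ := m) (v := v) p
  rwa [← hY.map_eq, memLp_map_measure_iff aestronglyMeasurable_id hY.aemeasurable] at h

lemma integral_eq_zero_of_hasLaw_gaussianReal (hY : HasLaw Y (gaussianReal 0 v) μ) :
    ∫ ω, Y ω ∂μ = 0 := by
  rw [hY.integral_eq, integral_id_gaussianReal]

lemma integral_pow_four_eq_of_hasLaw_gaussianReal (hY : HasLaw Y (gaussianReal 0 v) μ) :
    ∫ ω, Y ω ^ 4 ∂μ = 3 * (∫ ω, Y ω ^ 2 ∂μ) ^ 2 := by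
  have h4 := hY.integral_comp (f := fun x => x ^ 4) (by fun_prop)
  have h2 := hY.integral_comp (f := fun x => x ^ 2) (by fun_prop)
  simp only [Function.comp_def] at h4 h2
  rw [h4, h2, integral_pow_four_gaussianReal, integral_sq_gaussianReal]

lemma integrable_pow_four_of_hasLaw_gaussianReal {m : ℝ} (hY : HasLaw Y (gaussianReal m v) μ) :
    Integrable (fun ω => Y ω ^ 4) μ := by
  refine ((memLp_of_hasLaw_gaussianReal hY 4).integrable_norm_pow (p := 4) (by norm_num)).congr ?_
  filter_upwards with ω
  simp [Real.norm_eq_abs, Even.pow_abs (by decide : Even 4)]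

end GaussianLaw

lemma integral_sum_mul_sq {Ω ι : Type*} [MeasurableSpace Ω] [Fintype ι] {μ : Measure Ω}
    {Y : Ω → ι → ℝ} (hY : ∀ i, MemLp (fun ω => Y ω i) 2 μ) (a : ι → ℝ) :
    ∫ ω, (∑ i, a i * Y ω i) ^ 2 ∂μ = ∑ i, ∑ j, a i * a j * ∫ ω, Y ω i * Y ω j ∂μ := by
  have hint : ∀ i j, Integrable (fun ω => a i * Y ω i * (a j * Y ω j)) μ := fun i j =>
    (((hY i).integrable_mul (hY j)).const_mul (a i * a j)).congr
      (by filter_upwards with ω; simp only [Pi.mul_apply]; ring)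
  simp_rw [sq, sum_mul_sum]
  rw [integral_finsetSum _ fun i _ => integrable_finsetSum _ fun j _ => hint i j]
  refine sum_congr rfl fun i _ => ?_
  rw [integral_finsetSum _ fun j _ => hint i j]
  refine sum_congr rfl fun j _ => ?_
  rw [← integral_const_mul]
  congr 1; funext ω; ring

lemma covRV_eq_integral_mul {Ω : Type*} [MeasurableSpace Ω] {μ : Measure Ω} {U : Ω → ℝ}
    (V : Ω → ℝ) (hU : ∫ ω, U ω ∂μ = 0) : covRV μ U V = ∫ ω, U ω * V ω ∂μ := by
  simp [covRV, hU]

namespace IsCenteredGaussian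

variable {Ω : Type*} [MeasurableSpace Ω] {μ : Measure Ω} {n : ℕ} {X : Ω → Fin n → ℝ}

lemma hasLaw_sum (hX : IsCenteredGaussian μ X) (a : Fin n → ℝ) :
    ∃ v, HasLaw (fun ω => ∑ i, a i * X ω i) (gaussianReal 0 v) μ := by
  obtain ⟨v, hv⟩ := hX.2 a
  exact ⟨v, ⟨by have := hX.1; fun_prop, hv⟩⟩

lemma hasLaw_apply (hX : IsCenteredGaussian μ X) (i : Fin n) :
    ∃ v, HasLaw (fun ω => X ω i) (gaussianReal 0 v) μ := by
  simpa [Pi.single_apply] using hX.hasLaw_sum (Pi.single i 1)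

end IsCenteredGaussian

noncomputable def signSum (f : (Fin 4 → ℝ) → ℝ) : ℝ :=
  ∑ s ∈ ({-1, 1} : Finset ℝ), ∑ t ∈ ({-1, 1} : Finset ℝ), ∑ u ∈ ({-1, 1} : Finset ℝ),
    s * t * u * f ![1, s, t, u]

lemma signSum_pow_four (x : Fin 4 → ℝ) :
    signSum (fun a => (∑ i, a i * x i) ^ 4) = 192 * (x 0 * x 1 * x 2 * x 3) := by
  simp only [signSum, sum_pair (show (-1 : ℝ) ≠ 1 by norm_num), Fin.sum_univ_four,
    Matrix.cons_val_zero, Matrix.cons_val_one, Matrix.cons_val]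
  ring

lemma signSum_three_mul_sq_quadratic (c : Fin 4 → Fin 4 → ℝ) (hc : ∀ i j, c i j = c j i) :
    signSum (fun a => 3 * (∑ i, ∑ j, a i * a j * c i j) ^ 2) =
      192 * (c 0 1 * c 2 3 + c 0 2 * c 1 3 + c 0 3 * c 1 2) := by
  simp only [signSum, sum_pair (show (-1 : ℝ) ≠ 1 by norm_num), Fin.sum_univ_four,
    Matrix.cons_val_zero, Matrix.cons_val_one, Matrix.cons_val]
  rw [hc 1 0, hc 2 0, hc 3 0, hc 2 1, hc 3 1, hc 3 2]
  ring

lemma integral_signSum {Ω : Type*} [MeasurableSpace Ω] {μ : Measure Ω}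
    {f : (Fin 4 → ℝ) → Ω → ℝ} (hf : ∀ a, Integrable (f a) μ) :
    ∫ ω, signSum (fun a => f a ω) ∂μ = signSum (fun a => ∫ ω, f a ω ∂μ) := by
  simp only [signSum]
  rw [integral_finsetSum _ fun s _ => integrable_finsetSum _ fun t _ =>
    integrable_finsetSum _ fun u _ => (hf _).const_mul _]
  refine sum_congr rfl fun s _ => ?_
  rw [integral_finsetSum _ fun t _ => integrable_finsetSum _ fun u _ => (hf _).const_mul _]
  refine sum_congr rfl fun t _ => ?_
  rw [integral_finsetSum _ fun u _ => (hf _).const_mul _]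
  exact sum_congr rfl fun u _ => integral_const_mul _ _

theorem isserlis_four_general {Ω : Type*} [MeasurableSpace Ω] (μ : Measure Ω)
    (X : Ω → Fin 4 → ℝ) (hX : IsCenteredGaussian μ X) :
    ∫ ω, X ω 0 * X ω 1 * X ω 2 * X ω 3 ∂μ =
      covRV μ (fun ω => X ω 0) (fun ω => X ω 1) * covRV μ (fun ω => X ω 2) (fun ω => X ω 3)
    + covRV μ (fun ω => X ω 0) (fun ω => X ω 2) * covRV μ (fun ω => X ω 1) (fun ω => X ω 3)
    + covRV μ (fun ω => X ω 0) (fun ω => X ω 3) * covRV μ (fun ω => X ω 1) (fun ω => X ω 2) := by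
  set c : Fin 4 → Fin 4 → ℝ := fun i j => ∫ ω, X ω i * X ω j ∂μ
  choose v hv using hX.hasLaw_apply
  choose w hw using hX.hasLaw_sum
  have hcov : ∀ i j, covRV μ (fun ω => X ω i) (fun ω => X ω j) = c i j := fun i j =>
    covRV_eq_integral_mul _ (integral_eq_zero_of_hasLaw_gaussianReal (hv i))
  have hfourth : ∀ a : Fin 4 → ℝ,
      ∫ ω, (∑ i, a i * X ω i) ^ 4 ∂μ = 3 * (∑ i, ∑ j, a i * a j * c i j) ^ 2 := fun a => by
    rw [integral_pow_four_eq_of_hasLaw_gaussianReal (hw a),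
      integral_sum_mul_sq fun i => memLp_of_hasLaw_gaussianReal (hv i) 2]
  calc ∫ ω, X ω 0 * X ω 1 * X ω 2 * X ω 3 ∂μ
      = ∫ ω, signSum (fun a => (∑ i, a i * X ω i) ^ 4) / 192 ∂μ := by
        simp_rw [signSum_pow_four]; congr 1; funext ω; ring
    _ = signSum (fun a => 3 * (∑ i, ∑ j, a i * a j * c i j) ^ 2) / 192 := by
        rw [integral_div, integral_signSum fun a => integrable_pow_four_of_hasLaw_gaussianReal (hw a)]
        simp_rw [hfourth]
    _ = c 0 1 * c 2 3 + c 0 2 * c 1 3 + c 0 3 * c 1 2 := by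
        rw [signSum_three_mul_sq_quadratic c fun i j => by simp only [c, mul_comm]]; ring
  simp only [hcov]

/-- **Isserlis' theorem for four variables.** For a centered multivariate Gaussian vector
`(X₁, X₂, X₃, X₄)`,
`E(X₁X₂X₃X₄) = cov(X₁,X₂)cov(X₃,X₄) + cov(X₁,X₃)cov(X₂,X₄) + cov(X₁,X₄)cov(X₂,X₃)`. -/
theorem isserlis_four {Ω : Type*} [MeasurableSpace Ω] (μ : Measure Ω)
    [IsProbabilityMeasure μ] (X : Ω → Fin 4 → ℝ) (hX : IsCenteredGaussian μ X) :
    ∫ ω, X ω 0 * X ω 1 * X ω 2 * X ω 3 ∂μ =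
      covRV μ (fun ω => X ω 0) (fun ω => X ω 1) * covRV μ (fun ω => X ω 2) (fun ω => X ω 3)
    + covRV μ (fun ω => X ω 0) (fun ω => X ω 2) * covRV μ (fun ω => X ω 1) (fun ω => X ω 3)
    + covRV μ (fun ω => X ω 0) (fun ω => X ω 3) * covRV μ (fun ω => X ω 1) (fun ω => X ω 2) :=
  isserlis_four_general μ X hX
end

section
/- Fix a natural number k and real multivariate polynomials g₁, …, g_r ∈ ℝ[X₁, …, X_k]. There exists a polynomial P with real coefficients in the k(k+1)/2 variables indexed by pairs (i, j) with 1 ≤ i ≤ j ≤ k, depending only on g₁, …, g_r, such that for every centered multivariate Gaussian vector ξ = (ξ₁, …, ξ_k) with covariance matrix C, the mixed moment E(g₁(ξ) ⋯ g_r(ξ)) equals P evaluated at the entries (C_{ij})_{i ≤ j} of C. (This is the core of the paper's Corollary: moments of polynomial functions of a Gaussian vector are fixed polynomials in the covariance entries.) -/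
/-!
Polarization `d! • y₁ ⋯ y_d = ∑_t (-1)^|t| • (∑_{j ∉ t} y_j)^d` shows that the powers `⟨a, X⟩ⁿ`
of linear forms span all real polynomials. For such a power, `⟨a, ξ⟩` is a centered real Gaussian
of variance `aᵀ C a`, a quadratic form in the covariances, so `E ⟨a, ξ⟩ⁿ` vanishes for odd `n` and
equals `E[Z^{2m}] (aᵀ C a)^m` for `n = 2m`, `Z` standard. Both sides are linear in the polynomial,
so the claim holds for every polynomial, in particular for `g₁ ⋯ g_r`.
-/

open MeasureTheory ProbabilityTheory Finset

open MvPolynomial Submodule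
open scoped Nat NNReal

universe u

section Polarization

variable {A : Type*} [CommRing A]

theorem sum_surjective_prod_apply (d : ℕ) (y : Fin d → A) :
    ∑ p : Fin d → Fin d with Function.Surjective p, ∏ i, y (p i) = d ! • ∏ i, y i := by
  classical
  calc ∑ p : Fin d → Fin d with Function.Surjective p, ∏ i, y (p i)
      = ∑ σ : Equiv.Perm (Fin d), ∏ i, y (σ i) :=
        sum_bij' (fun p hp => Equiv.ofBijective p (mem_filter.1 hp).2.bijective_of_finite)
          (fun σ _ => σ) (by simp) (fun σ _ => by simpa using σ.surjective)
          (fun _ _ => rfl) (fun _ _ => by ext; rfl) (fun _ _ => rfl)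
    _ = d ! • ∏ i, y i := by simp [Equiv.prod_comp, Fintype.card_perm]

/-- Inclusion–exclusion over the coordinates missed by `p : Fin d → Fin d` in the expansion
`(∑ j ∈ s, y j) ^ d = ∑_{p : Fin d → s} ∏ i, y (p i)` leaves only the surjective `p`. -/
theorem sum_neg_one_pow_smul_sum_compl_pow (d : ℕ) (y : Fin d → A) :
    ∑ t : Finset (Fin d), (-1 : ℤ) ^ #t • (∑ j ∈ tᶜ, y j) ^ d = d ! • ∏ j, y j := by
  classical
  let S : Fin d → Finset (Fin d → Fin d) := fun i => {p | i ∉ Set.range p}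
  have mem_inf (t : Finset (Fin d)) (T : Fin d → Finset (Fin d → Fin d)) (p : Fin d → Fin d) :
      p ∈ t.inf T ↔ ∀ i ∈ t, p ∈ T i := by
    induction t using cons_induction <;> simp [*]
  have hsurj : univ.inf (fun i => (S i)ᶜ) = univ.filter Function.Surjective := by
    ext p; simp [mem_inf, S, Function.Surjective]
  have hinf (t : Finset (Fin d)) : t.inf S = Fintype.piFinset fun _ => tᶜ := by
    ext p; simp [mem_inf, S, Fintype.mem_piFinset]; aesop
  have h := inclusion_exclusion_sum_inf_compl univ S (fun p => ∏ i, y (p i))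
  simp only [hsurj, hinf, ← prod_univ_sum, prod_const, card_univ, Fintype.card_fin,
    powerset_univ] at h
  rw [← h, sum_surjective_prod_apply]

end Polarization

section SpanPow

variable {R A : Type*} [Field R] [CharZero R] [CommRing A] [Algebra R A]

theorem prod_mem_span_pow_of_forall_mem (L : Submodule R A) {d : ℕ} {y : Fin d → A}
    (hy : ∀ j, y j ∈ L) : ∏ j, y j ∈ span R ((· ^ d) '' (L : Set A)) := by
  have hfact : (d ! : R) ≠ 0 := by exact_mod_cast d.factorial_ne_zero
  have hsum : d ! • ∏ j, y j ∈ span R ((· ^ d) '' (L : Set A)) := by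
    rw [← sum_neg_one_pow_smul_sum_compl_pow]
    exact sum_mem fun t _ =>
      zsmul_mem (subset_span (Set.mem_image_of_mem _ (sum_mem fun j _ => hy j))) _
  rw [← Nat.cast_smul_eq_nsmul R] at hsum
  simpa [smul_smul, hfact] using smul_mem _ (d ! : R)⁻¹ hsum

theorem Algebra.adjoin_le_span_pow (L : Submodule R A) :
    Subalgebra.toSubmodule (Algebra.adjoin R (L : Set A)) ≤
      span R {x | ∃ n : ℕ, ∃ ℓ ∈ L, ℓ ^ n = x} := by
  rw [Algebra.adjoin_eq_span, span_le]
  intro x hx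
  obtain ⟨l, hl, rfl⟩ := Submonoid.exists_list_of_mem_closure hx
  rw [← List.ofFn_get l, List.prod_ofFn]
  refine span_mono ?_ (prod_mem_span_pow_of_forall_mem L fun j => hl _ (List.get_mem l j))
  rintro _ ⟨ℓ, hℓ, rfl⟩
  exact ⟨_, ℓ, hℓ, rfl⟩

theorem MvPolynomial.mem_span_pow_of_mem_span_X {σ : Type*} (p : MvPolynomial σ R) :
    p ∈ span R {x | ∃ n : ℕ, ∃ ℓ ∈ span R (Set.range X), ℓ ^ n = x} := by
  apply Algebra.adjoin_le_span_pow
  refine Algebra.adjoin_mono subset_span ?_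
  rw [adjoin_range_X]
  trivial

end SpanPow

section GaussianReal

variable {v : ℝ≥0}

theorem integrable_pow_gaussianReal (m : ℝ) (n : ℕ) :
    Integrable (fun x => x ^ n) (gaussianReal m v) :=
  integrable_pow_of_mem_interior_integrableExpSet (X := fun x => x) (by simp) n

theorem integral_sq_gaussianReal_zero : ∫ x, x ^ 2 ∂gaussianReal 0 v = v := by
  rw [← variance_of_integral_eq_zero aemeasurable_id' (by simp), variance_fun_id_gaussianReal]

theorem integral_pow_gaussianReal_zero_of_odd {n : ℕ} (hn : Odd n) :
    ∫ x, x ^ n ∂gaussianReal 0 v = 0 := by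
  have h : ∫ x, x ^ n ∂(gaussianReal 0 v).map (fun x => -x) = ∫ x, (-x) ^ n ∂gaussianReal 0 v :=
    integral_map (by fun_prop) (by fun_prop)
  simp only [gaussianReal_map_neg, neg_zero, hn.neg_pow, integral_neg] at h
  linarith

theorem integral_pow_two_mul_gaussianReal_zero (m : ℕ) :
    ∫ x, x ^ (2 * m) ∂gaussianReal 0 v = v ^ m * ∫ x, x ^ (2 * m) ∂gaussianReal 0 1 := by
  have hmap : (gaussianReal 0 1).map (√v * ·) = gaussianReal 0 v := by
    rw [gaussianReal_map_const_mul, mul_zero, mul_one]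
    congr
    simp
  rw [← hmap, integral_map (by fun_prop) (by fun_prop)]
  simp_rw [mul_pow, pow_mul, Real.sq_sqrt v.coe_nonneg, integral_const_mul]

end GaussianReal

namespace IsCenteredGaussian

variable {Ω : Type*} [MeasurableSpace Ω] {μ : Measure Ω} {k : ℕ} {ξ : Ω → Fin k → ℝ}

theorem memLp_two_apply (hξ : IsCenteredGaussian μ ξ) (i : Fin k) :
    MemLp (fun ω => ξ ω i) 2 μ := by
  obtain ⟨v, hv⟩ := hξ.2 (Pi.single i 1)
  simp only [Pi.single_apply, ite_mul, one_mul, zero_mul, sum_ite_eq', mem_univ,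
    if_true] at hv
  have hmeas := hξ.1
  rw [← Function.id_comp fun ω => ξ ω i, ← memLp_map_measure_iff (by fun_prop) (by fun_prop), hv]
  exact memLp_id_gaussianReal' 2 (by simp)

theorem integrable_sum_mul_pow (hξ : IsCenteredGaussian μ ξ) (a : Fin k → ℝ) (n : ℕ) :
    Integrable (fun ω => (∑ i, a i * ξ ω i) ^ n) μ := by
  obtain ⟨v, hv⟩ := hξ.2 a
  have hmeas := hξ.1
  exact (integrable_map_measure (g := fun x : ℝ => x ^ n) (by fun_prop) (by fun_prop)).1
    (hv ▸ integrable_pow_gaussianReal 0 n)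

theorem integral_sum_mul_sq (hξ : IsCenteredGaussian μ ξ) (a : Fin k → ℝ) :
    ∫ ω, (∑ i, a i * ξ ω i) ^ 2 ∂μ = ∑ i, ∑ j, a i * a j * ∫ ω, ξ ω i * ξ ω j ∂μ := by
  have hint (i j : Fin k) : Integrable (fun ω => a i * a j * (ξ ω i * ξ ω j)) μ :=
    ((hξ.memLp_two_apply i).integrable_mul (hξ.memLp_two_apply j)).const_mul _
  simp_rw [sq, sum_mul_sum, mul_mul_mul_comm (a _) (ξ _ _)]
  rw [integral_finsetSum _ fun i _ => integrable_finsetSum _ fun j _ => hint i j]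
  refine sum_congr rfl fun i _ => ?_
  rw [integral_finsetSum _ fun j _ => hint i j]
  simp_rw [integral_const_mul]

theorem exists_hasLaw_sum_mul (hξ : IsCenteredGaussian μ ξ) (a : Fin k → ℝ) :
    ∃ v : ℝ≥0, (v : ℝ) = ∑ i, ∑ j, a i * a j * ∫ ω, ξ ω i * ξ ω j ∂μ ∧
      HasLaw (fun ω => ∑ i, a i * ξ ω i) (gaussianReal 0 v) μ := by
  obtain ⟨v, hv⟩ := hξ.2 a
  have hmeas := hξ.1
  have hlaw : HasLaw (fun ω => ∑ i, a i * ξ ω i) (gaussianReal 0 v) μ := ⟨by fun_prop, hv⟩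
  refine ⟨v, ?_, hlaw⟩
  rw [← hξ.integral_sum_mul_sq, ← integral_sq_gaussianReal_zero]
  exact (hlaw.integral_comp (f := fun x => x ^ 2) (by fun_prop)).symm

theorem integral_sum_mul_pow_two_mul (hξ : IsCenteredGaussian μ ξ) (a : Fin k → ℝ) (m : ℕ) :
    ∫ ω, (∑ i, a i * ξ ω i) ^ (2 * m) ∂μ =
      (∑ i, ∑ j, a i * a j * ∫ ω, ξ ω i * ξ ω j ∂μ) ^ m * ∫ x, x ^ (2 * m) ∂gaussianReal 0 1 := by
  obtain ⟨v, hv, hlaw⟩ := hξ.exists_hasLaw_sum_mul a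
  rw [← hv, ← integral_pow_two_mul_gaussianReal_zero]
  exact hlaw.integral_comp (f := fun x => x ^ (2 * m)) (by fun_prop)

theorem integral_sum_mul_pow_of_odd (hξ : IsCenteredGaussian μ ξ) (a : Fin k → ℝ) {n : ℕ}
    (hn : Odd n) : ∫ ω, (∑ i, a i * ξ ω i) ^ n ∂μ = 0 := by
  obtain ⟨v, -, hlaw⟩ := hξ.exists_hasLaw_sum_mul a
  rw [← integral_pow_gaussianReal_zero_of_odd (v := v) hn]
  exact hlaw.integral_comp (f := fun x => x ^ n) (by fun_prop)

end IsCenteredGaussian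

def sortPair {α : Type*} [LinearOrder α] (i j : α) : {ij : α × α // ij.1 ≤ ij.2} :=
  ⟨(min i j, max i j), min_le_max⟩

theorem mul_apply_sortPair {α M : Type*} [LinearOrder α] [CommMagma M] (f : α → M) (i j : α) :
    f (sortPair i j).1.1 * f (sortPair i j).1.2 = f i * f j := by
  rcases le_total i j with h | h <;> simp [sortPair, h, mul_comm]

/-- Integrability is part of the condition so that the carrier is closed under addition. -/
def gaussianMomentSubmodule (k : ℕ) : Submodule ℝ (MvPolynomial (Fin k) ℝ) where
  carrier := {G | ∃ P : MvPolynomial {ij : Fin k × Fin k // ij.1 ≤ ij.2} ℝ,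
    ∀ (Ω : Type u) [MeasurableSpace Ω] (μ : Measure Ω) (ξ : Ω → Fin k → ℝ),
      IsCenteredGaussian μ ξ → Integrable (fun ω => eval (ξ ω) G) μ ∧
        ∫ ω, eval (ξ ω) G ∂μ = eval (fun ij => ∫ ω, ξ ω ij.1.1 * ξ ω ij.1.2 ∂μ) P}
  add_mem' := by
    rintro G₁ G₂ ⟨P₁, h₁⟩ ⟨P₂, h₂⟩
    refine ⟨P₁ + P₂, fun Ω _ μ ξ hξ => ?_⟩
    obtain ⟨hint₁, heq₁⟩ := h₁ Ω μ ξ hξ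
    obtain ⟨hint₂, heq₂⟩ := h₂ Ω μ ξ hξ
    simp only [map_add]
    exact ⟨hint₁.add hint₂, by rw [integral_add hint₁ hint₂, heq₁, heq₂]⟩
  zero_mem' := ⟨0, fun _ _ _ _ _ => by simp⟩
  smul_mem' := by
    rintro c G ⟨P, h⟩
    refine ⟨c • P, fun Ω _ μ ξ hξ => ?_⟩
    obtain ⟨hint, heq⟩ := h Ω μ ξ hξ
    simp only [smul_eq_C_mul, map_mul, eval_C]
    exact ⟨hint.const_mul c, by rw [integral_const_mul, heq]⟩

theorem pow_sum_smul_X_mem_gaussianMomentSubmodule {k : ℕ} (a : Fin k → ℝ) (n : ℕ) :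
    (∑ i, a i • X i) ^ n ∈ gaussianMomentSubmodule.{u} k := by
  have heval (x : Fin k → ℝ) : eval x ((∑ i, a i • X i) ^ n) = (∑ i, a i * x i) ^ n := by
    simp [smul_eval]
  obtain ⟨m, rfl | rfl⟩ := Nat.even_or_odd' n
  · refine ⟨C (∫ x, x ^ (2 * m) ∂gaussianReal 0 1) *
      (∑ i, ∑ j, C (a i * a j) * X (sortPair i j)) ^ m, fun Ω _ μ ξ hξ =>
      ⟨by simpa only [heval] using hξ.integrable_sum_mul_pow a _, ?_⟩⟩
    simp_rw [heval]
    rw [hξ.integral_sum_mul_pow_two_mul]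
    simp [mul_apply_sortPair, mul_comm]
  · refine ⟨0, fun Ω _ μ ξ hξ =>
      ⟨by simpa only [heval] using hξ.integrable_sum_mul_pow a _, ?_⟩⟩
    simp_rw [heval]
    rw [hξ.integral_sum_mul_pow_of_odd a (odd_two_mul_add_one m), map_zero]

theorem gaussianMomentSubmodule_eq_top (k : ℕ) : gaussianMomentSubmodule.{u} k = ⊤ := by
  refine eq_top_iff.2 fun G _ => span_le.2 ?_ G.mem_span_pow_of_mem_span_X
  rintro _ ⟨n, ℓ, hℓ, rfl⟩
  obtain ⟨a, rfl⟩ := (mem_span_range_iff_exists_fun ℝ).1 hℓ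
  exact pow_sum_smul_X_mem_gaussianMomentSubmodule a n

/-- For fixed real multivariate polynomials `g₁, …, g_r ∈ ℝ[X₁, …, X_k]` there is a fixed
polynomial `P` in the variables indexed by the pairs `(i, j)` with `i ≤ j`, depending only on
`g₁, …, g_r`, such that for every centered multivariate Gaussian vector `ξ` with covariance
matrix `C`, the mixed moment `E(g₁(ξ) ⋯ g_r(ξ))` equals `P` evaluated at the entries
`(C_{ij})_{i ≤ j}`. -/
theorem moment_polynomials_polynomial_in_covariances (k r : ℕ)
    (g : Fin r → MvPolynomial (Fin k) ℝ) :
    ∃ P : MvPolynomial {ij : Fin k × Fin k // ij.1 ≤ ij.2} ℝ,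
      ∀ (Ω : Type) [MeasurableSpace Ω] (μ : Measure Ω) [IsProbabilityMeasure μ]
        (ξ : Ω → Fin k → ℝ), IsCenteredGaussian μ ξ →
        ∫ ω, ∏ j, MvPolynomial.eval (ξ ω) (g j) ∂μ =
          MvPolynomial.eval (fun ij => ∫ ω, ξ ω ij.1.1 * ξ ω ij.1.2 ∂μ) P := by
  have hmem : ∏ j, g j ∈ gaussianMomentSubmodule.{0} k := by
    rw [gaussianMomentSubmodule_eq_top]
    trivial
  obtain ⟨P, hP⟩ := hmem
  refine ⟨P, fun Ω _ μ _ ξ hξ => ?_⟩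
  simpa only [map_prod] using (hP Ω μ ξ hξ).2
end

section
/- Let ξ : Ω → ℝ^k be a centered multivariate Gaussian random vector, let δ : Ω → ℝ^{m₁}, ζ : Ω → ℝ^l, ε : Ω → ℝ^{m₂} be square-integrable centered random vectors (E δ = 0, E ζ = 0, E ε = 0), and assume ξ, δ, ζ, ε are mutually independent. Let f : ℝ^k → ℝ^l be a function each of whose components is a polynomial, and let Λ_x be a real m₁ × k matrix and Λ_y a real m₂ × l matrix. Define x := Λ_x ξ + δ and y := Λ_y (f(ξ) + ζ) + ε. Then for all indices i ∈ {1, …, m₂} and j ∈ {1, …, m₁}: E(yᵢ xⱼ) = (Λ_y · E(f(ξ) ξᵀ) · Λ_xᵀ)_{ij}, where E(f(ξ) ξᵀ) is the l × k matrix with entries E(f(ξ)_a ξ_b). (This is equation (2.8) of the paper: the cross-covariance block of a polynomial structural equation model.) -/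
open MeasureTheory ProbabilityTheory Finset

/-!
Write `y_i = G + N` and `x_j = U + D`, where `G = Σ_a (Λ_y)_{ia} f_a(ξ)` and `U = Σ_b (Λ_x)_{jb} ξ_b`
are functions of `ξ`, `D = δ_j`, and `N = Σ_a (Λ_y)_{ia} ζ_a + ε_i` is a function of `(ζ, ε)`.
Expanding `E[(G + N)(U + D)]`, the term `E[G D]` factors as `E[G] E[D] = 0` because `ξ ⫫ δ`, and
`E[N (U + D)]` factors as `E[N] E[U + D] = 0` because `(ξ, δ) ⫫ (ζ, ε)`. What remains is
`E[G U] = Σ_{a,b} (Λ_y)_{ia} (Λ_x)_{jb} E[f_a(ξ) ξ_b]`, which is finite since Gaussian coordinates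
have moments of all orders and hence so does every polynomial in them.
-/

open scoped ENNReal NNReal

lemma ENNReal.holderTriple_two_mul (p : ℝ≥0∞) : ENNReal.HolderTriple (2 * p) (2 * p) p where
  inv_add_inv_eq_inv := by
    rw [ENNReal.mul_inv (by simp) (by simp), ← add_mul, ENNReal.inv_two_add_inv_two, one_mul]

lemma MvPolynomial.memLp_eval {Ω σ : Type*} [MeasurableSpace Ω] {μ : Measure Ω}
    [IsFiniteMeasure μ] {X : Ω → σ → ℝ} (hX : ∀ i (p : ℝ≥0), MemLp (fun ω => X ω i) p μ)
    (g : MvPolynomial σ ℝ) (p : ℝ≥0) : MemLp (fun ω => MvPolynomial.eval (X ω) g) p μ := by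
  induction g using MvPolynomial.induction_on generalizing p with
  | C a => simpa using memLp_const a
  | add g h hg hh =>
    simp only [map_add]
    exact (hg p).add (hh p)
  | mul_X g i hg =>
    have := ENNReal.holderTriple_two_mul p
    have hXi : MemLp (fun ω => X ω i) (2 * p : ℝ≥0∞) μ := by exact_mod_cast hX i (2 * p)
    have hg' : MemLp (fun ω => MvPolynomial.eval (X ω) g) (2 * p : ℝ≥0∞) μ := by
      exact_mod_cast hg (2 * p)
    simp only [map_mul, MvPolynomial.eval_X]
    exact hXi.mul hg'

section Gaussian

variable {Ω : Type*} [MeasurableSpace Ω] {μ : Measure Ω} {k : ℕ} {ξ : Ω → Fin k → ℝ}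

lemma IsCenteredGaussian.memLp_apply (hξ : IsCenteredGaussian μ ξ) (i : Fin k) (p : ℝ≥0) :
    MemLp (fun ω => ξ ω i) p μ := by
  obtain ⟨v, hv⟩ := hξ.2 (Pi.single i 1)
  simp only [Pi.single_apply, ite_mul, one_mul, zero_mul, Finset.sum_ite_eq', Finset.mem_univ,
    if_true] at hv
  have hξi : Measurable fun ω => ξ ω i := (measurable_pi_apply i).comp hξ.1
  refine (memLp_map_measure_iff measurable_id.aestronglyMeasurable hξi.aemeasurable).1 ?_
  rw [hv]
  exact memLp_id_gaussianReal p

lemma IsCenteredGaussian.integrable_eval [IsFiniteMeasure μ] (hξ : IsCenteredGaussian μ ξ)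
    (g : MvPolynomial (Fin k) ℝ) : Integrable (fun ω => MvPolynomial.eval (ξ ω) g) μ :=
  memLp_one_iff_integrable.1 (by exact_mod_cast MvPolynomial.memLp_eval hξ.memLp_apply g 1)

lemma IsCenteredGaussian.integrable_eval_mul_apply [IsFiniteMeasure μ]
    (hξ : IsCenteredGaussian μ ξ) (g : MvPolynomial (Fin k) ℝ) (b : Fin k) :
    Integrable (fun ω => MvPolynomial.eval (ξ ω) g * ξ ω b) μ := by
  have h := hξ.integrable_eval (g * MvPolynomial.X b)
  simp only [map_mul, MvPolynomial.eval_X] at h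
  exact h

lemma IsCenteredGaussian.integrable_apply [IsFiniteMeasure μ] (hξ : IsCenteredGaussian μ ξ)
    (b : Fin k) : Integrable (fun ω => ξ ω b) μ := by
  simpa using hξ.integrable_eval (MvPolynomial.X b)

end Gaussian

lemma Finset.sum_mul_mul_sum_mul {ι κ R : Type*} [CommSemiring R] (s : Finset ι) (t : Finset κ)
    (u x : ι → R) (v y : κ → R) :
    (∑ a ∈ s, u a * x a) * ∑ b ∈ t, v b * y b = ∑ a ∈ s, ∑ b ∈ t, u a * v b * (x a * y b) := by
  rw [Finset.sum_mul_sum]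
  exact Finset.sum_congr rfl fun a _ => Finset.sum_congr rfl fun b _ => mul_mul_mul_comm ..

lemma Matrix.mul_mul_transpose_apply {m n p q R : Type*} [Fintype n] [Fintype q] [CommSemiring R]
    (A : Matrix m n R) (M : Matrix n q R) (B : Matrix p q R) (i : m) (j : p) :
    (A * M * B.transpose) i j = ∑ a, ∑ b, A i a * B j b * M a b := by
  simp only [Matrix.mul_apply, Matrix.transpose_apply, Finset.sum_mul]
  rw [Finset.sum_comm]
  exact Finset.sum_congr rfl fun a _ => Finset.sum_congr rfl fun b _ => by ring

section LinearCombinations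

variable {Ω ι κ : Type*} [MeasurableSpace Ω] {μ : Measure Ω} [Fintype ι] [Fintype κ]

lemma integrable_sum_mul {Z : ι → Ω → ℝ} (hZ : ∀ a, Integrable (Z a) μ) (c : ι → ℝ) :
    Integrable (fun ω => ∑ a, c a * Z a ω) μ :=
  integrable_finsetSum _ fun a _ => (hZ a).const_mul (c a)

lemma integral_sum_mul_eq_zero {Z : ι → Ω → ℝ} (hZ : ∀ a, Integrable (Z a) μ)
    (hZ0 : ∀ a, ∫ ω, Z a ω ∂μ = 0) (c : ι → ℝ) : ∫ ω, ∑ a, c a * Z a ω ∂μ = 0 := by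
  rw [integral_finsetSum _ fun a _ => (hZ a).const_mul (c a)]
  simp only [integral_const_mul, hZ0, mul_zero, Finset.sum_const_zero]

lemma integrable_sum_mul_sum {F : ι → Ω → ℝ} {H : κ → Ω → ℝ}
    (hFH : ∀ a b, Integrable (fun ω => F a ω * H b ω) μ) (u : ι → ℝ) (v : κ → ℝ) :
    Integrable (fun ω => (∑ a, u a * F a ω) * ∑ b, v b * H b ω) μ := by
  simp only [Finset.sum_mul_mul_sum_mul]
  exact integrable_finsetSum _ fun a _ => integrable_finsetSum _ fun b _ =>
    (hFH a b).const_mul _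

lemma integral_sum_mul_sum {F : ι → Ω → ℝ} {H : κ → Ω → ℝ}
    (hFH : ∀ a b, Integrable (fun ω => F a ω * H b ω) μ) (u : ι → ℝ) (v : κ → ℝ) :
    ∫ ω, (∑ a, u a * F a ω) * (∑ b, v b * H b ω) ∂μ =
      ∑ a, ∑ b, u a * v b * ∫ ω, F a ω * H b ω ∂μ := by
  simp only [Finset.sum_mul_mul_sum_mul]
  rw [integral_finsetSum _ fun a _ => integrable_finsetSum _ fun b _ => (hFH a b).const_mul _]
  refine Finset.sum_congr rfl fun a _ => ?_
  rw [integral_finsetSum _ fun b _ => (hFH a b).const_mul _]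
  simp only [integral_const_mul]

end LinearCombinations

lemma integral_add_mul_add_eq_integral_mul {Ω : Type*} [MeasurableSpace Ω] {μ : Measure Ω}
    {G N U D : Ω → ℝ}
    (hG : Integrable G μ) (hN : Integrable N μ) (hU : Integrable U μ) (hD : Integrable D μ)
    (hGU : Integrable (fun ω => G ω * U ω) μ)
    (hGD : IndepFun G D μ) (hNUD : IndepFun N (fun ω => U ω + D ω) μ)
    (hD0 : ∫ ω, D ω ∂μ = 0) (hN0 : ∫ ω, N ω ∂μ = 0) :
    ∫ ω, (G ω + N ω) * (U ω + D ω) ∂μ = ∫ ω, G ω * U ω ∂μ := by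
  have hUD : Integrable (fun ω => U ω + D ω) μ := hU.add hD
  have hGD_int : Integrable (fun ω => G ω * D ω) μ := hGD.integrable_mul hG hD
  have hGUD_int : Integrable (fun ω => G ω * U ω + G ω * D ω) μ := hGU.add hGD_int
  have hNUD_int : Integrable (fun ω => N ω * (U ω + D ω)) μ := hNUD.integrable_mul hN hUD
  have hGD0 : ∫ ω, G ω * D ω ∂μ = 0 := by
    rw [hGD.integral_fun_mul_eq_mul_integral hG.1 hD.1, hD0, mul_zero]
  have hNUD0 : ∫ ω, N ω * (U ω + D ω) ∂μ = 0 := by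
    rw [hNUD.integral_fun_mul_eq_mul_integral hN.1 hUD.1, hN0, zero_mul]
  calc ∫ ω, (G ω + N ω) * (U ω + D ω) ∂μ
      = ∫ ω, G ω * U ω + G ω * D ω + N ω * (U ω + D ω) ∂μ := by
        congr with ω; ring
    _ = ∫ ω, G ω * U ω ∂μ := by
        rw [integral_add hGUD_int hNUD_int, integral_add hGU hGD_int, hGD0, hNUD0,
          add_zero, add_zero]

theorem cross_moment_polynomial_sem_general {Ω : Type*} [MeasurableSpace Ω]
    (μ : Measure Ω) [IsProbabilityMeasure μ] {k l m₁ m₂ : ℕ}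
    (ξ : Ω → Fin k → ℝ) (δ : Ω → Fin m₁ → ℝ) (ζ : Ω → Fin l → ℝ) (ε : Ω → Fin m₂ → ℝ)
    (hξ : IsCenteredGaussian μ ξ)
    (hδ2 : ∀ a, MemLp (fun ω => δ ω a) 2 μ) (hδ0 : ∀ a, ∫ ω, δ ω a ∂μ = 0)
    (hζ2 : ∀ a, MemLp (fun ω => ζ ω a) 2 μ) (hζ0 : ∀ a, ∫ ω, ζ ω a ∂μ = 0)
    (hε2 : ∀ a, MemLp (fun ω => ε ω a) 2 μ) (hε0 : ∀ a, ∫ ω, ε ω a ∂μ = 0)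
    (hIndep : iIndepFun (β := fun i : Fin 4 => Fin (![k, m₁, l, m₂] i) → ℝ)
      (m := fun _ => inferInstance)
      (Fin.cons ξ (Fin.cons δ (Fin.cons ζ (Fin.cons ε finZeroElim)))) μ)
    (f : Fin l → MvPolynomial (Fin k) ℝ)
    (Λx : Matrix (Fin m₁) (Fin k) ℝ) (Λy : Matrix (Fin m₂) (Fin l) ℝ)
    (x : Ω → Fin m₁ → ℝ) (hx : ∀ ω j, x ω j = (∑ a, Λx j a * ξ ω a) + δ ω j)
    (y : Ω → Fin m₂ → ℝ)
    (hy : ∀ ω i, y ω i =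
      (∑ a, Λy i a * (MvPolynomial.eval (ξ ω) (f a) + ζ ω a)) + ε ω i) :
    ∀ i j, ∫ ω, y ω i * x ω j ∂μ =
      (Λy * (Matrix.of fun a b => ∫ ω, MvPolynomial.eval (ξ ω) (f a) * ξ ω b ∂μ)
        * Λx.transpose) i j := by
  intro i j
  have hξδ : IndepFun ξ δ μ := hIndep.indepFun (show (0 : Fin 4) ≠ 1 by decide)
  have hξδ_ζε : IndepFun (fun ω => (ξ ω, δ ω)) (fun ω => (ζ ω, ε ω)) μ :=
    hIndep.indepFun_prodMk_prodMk₀ (fun n => by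
      fin_cases n
      exacts [hξ.1.aemeasurable, aemeasurable_pi_lambda _ fun a => (hδ2 a).1.aemeasurable,
        aemeasurable_pi_lambda _ fun a => (hζ2 a).1.aemeasurable,
        aemeasurable_pi_lambda _ fun a => (hε2 a).1.aemeasurable])
      0 1 2 3 (by decide) (by decide) (by decide) (by decide)
  have hζ := fun a => (hζ2 a).integrable one_le_two
  have hε := fun a => (hε2 a).integrable one_le_two
  have hfξ := fun a b => hξ.integrable_eval_mul_apply (f a) b
  have hG : Measurable fun v : Fin k → ℝ => ∑ a, Λy i a * MvPolynomial.eval v (f a) :=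
    Finset.measurable_sum _ fun a _ => (MvPolynomial.continuous_eval (f a)).measurable.const_mul _
  have hN : Measurable fun p : (Fin l → ℝ) × (Fin m₂ → ℝ) => ∑ a, Λy i a * p.1 a + p.2 i := by
    fun_prop
  have hUD : Measurable fun p : (Fin k → ℝ) × (Fin m₁ → ℝ) => ∑ b, Λx j b * p.1 b + p.2 j := by
    fun_prop
  calc ∫ ω, y ω i * x ω j ∂μ
      = ∫ ω, ((∑ a, Λy i a * MvPolynomial.eval (ξ ω) (f a)) + (∑ a, Λy i a * ζ ω a + ε ω i))
          * ((∑ b, Λx j b * ξ ω b) + δ ω j) ∂μ := by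
        congr with ω
        simp only [hy, hx, mul_add, Finset.sum_add_distrib]
        ring
    _ = ∫ ω, (∑ a, Λy i a * MvPolynomial.eval (ξ ω) (f a)) * (∑ b, Λx j b * ξ ω b) ∂μ := by
        refine integral_add_mul_add_eq_integral_mul
          (integrable_sum_mul (fun a => hξ.integrable_eval (f a)) _)
          ((integrable_sum_mul hζ _).add (hε i)) (integrable_sum_mul hξ.integrable_apply _)
          ((hδ2 j).integrable one_le_two) (integrable_sum_mul_sum hfξ _ _)
          (hξδ.comp hG (measurable_pi_apply j)) (hξδ_ζε.comp hUD hN).symm (hδ0 j) ?_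
        rw [integral_add (integrable_sum_mul hζ _) (hε i), integral_sum_mul_eq_zero hζ hζ0,
          hε0, add_zero]
    _ = ∑ a, ∑ b, Λy i a * Λx j b * ∫ ω, MvPolynomial.eval (ξ ω) (f a) * ξ ω b ∂μ :=
        integral_sum_mul_sum hfξ _ _
    _ = _ := by rw [Matrix.mul_mul_transpose_apply]; rfl

/-- **Equation (2.8).** In the polynomial structural equation model
`x = Λ_x ξ + δ`, `y = Λ_y (f(ξ) + ζ) + ε` with centered Gaussian `ξ`, square-integrable
centered errors `δ, ζ, ε`, mutual independence of `ξ, δ, ζ, ε`, and polynomial map `f`,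
the cross block of second moments is `E(yx') = Λ_y E(f(ξ)ξ') Λ_x'` entrywise. -/
theorem cross_moment_polynomial_sem {Ω : Type*} [MeasurableSpace Ω]
    (μ : Measure Ω) [IsProbabilityMeasure μ] {k l m₁ m₂ : ℕ}
    (ξ : Ω → Fin k → ℝ) (δ : Ω → Fin m₁ → ℝ) (ζ : Ω → Fin l → ℝ) (ε : Ω → Fin m₂ → ℝ)
    (hξ : IsCenteredGaussian μ ξ)
    (hδmeas : Measurable δ) (hζmeas : Measurable ζ) (hεmeas : Measurable ε)
    (hδ2 : ∀ a, MemLp (fun ω => δ ω a) 2 μ) (hδ0 : ∀ a, ∫ ω, δ ω a ∂μ = 0)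
    (hζ2 : ∀ a, MemLp (fun ω => ζ ω a) 2 μ) (hζ0 : ∀ a, ∫ ω, ζ ω a ∂μ = 0)
    (hε2 : ∀ a, MemLp (fun ω => ε ω a) 2 μ) (hε0 : ∀ a, ∫ ω, ε ω a ∂μ = 0)
    (hIndep : iIndepFun (β := fun i : Fin 4 => Fin (![k, m₁, l, m₂] i) → ℝ)
      (m := fun _ => inferInstance)
      (Fin.cons ξ (Fin.cons δ (Fin.cons ζ (Fin.cons ε finZeroElim)))) μ)
    (f : Fin l → MvPolynomial (Fin k) ℝ)
    (Λx : Matrix (Fin m₁) (Fin k) ℝ) (Λy : Matrix (Fin m₂) (Fin l) ℝ)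
    (x : Ω → Fin m₁ → ℝ) (hx : ∀ ω j, x ω j = (∑ a, Λx j a * ξ ω a) + δ ω j)
    (y : Ω → Fin m₂ → ℝ)
    (hy : ∀ ω i, y ω i =
      (∑ a, Λy i a * (MvPolynomial.eval (ξ ω) (f a) + ζ ω a)) + ε ω i) :
    ∀ i j, ∫ ω, y ω i * x ω j ∂μ =
      (Λy * (Matrix.of fun a b => ∫ ω, MvPolynomial.eval (ξ ω) (f a) * ξ ω b ∂μ)
        * Λx.transpose) i j :=
  cross_moment_polynomial_sem_general μ ξ δ ζ ε hξ hδ2 hδ0 hζ2 hζ0 hε2 hε0 hIndep f Λx Λy x hx y hy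
end
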